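/- arXiv:1609.01563 — 6 statements merged into one kernel-verified Lean document; each statement's English description precedes it below -/
import Mathlib

section
/- Let x = (α,0) and y = (γ,0) be points of ℤ² with α < γ, and let R₁, R₂ be integers with R₁ ≥ 1, R₂ ≥ 0, |R₁ − R₂| ≤ γ − α ≤ R₁ + R₂. If C_d(x,R₁) ∩ C_d(y,R₂) = ∅, then C_d(x,R₁−1) ∩ C_d(y,R₂) ≠ ∅. -/
/-- L1 (taxicab) distance on the digital plane ℤ². -/
def dL1 (p q : ℤ × ℤ) : ℤ := |p.1 - q.1| + |p.2 - q.2|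

/-- Digital circle with center `x` and radius `r`. -/
def digCircle (x : ℤ × ℤ) (r : ℤ) : Set (ℤ × ℤ) := {z | dL1 x z = r}

theorem digCircle_shrink_inter (α γ R₁ R₂ : ℤ) (hαγ : α < γ)
    (hR₁ : 1 ≤ R₁) (hR₂ : 0 ≤ R₂)
    (hlo : |R₁ - R₂| ≤ γ - α) (hhi : γ - α ≤ R₁ + R₂)
    (hdisj : digCircle (α, 0) R₁ ∩ digCircle (γ, 0) R₂ = ∅) :
    (digCircle (α, 0) (R₁ - 1) ∩ digCircle (γ, 0) R₂).Nonempty := by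
  rw [abs_le] at hlo
  have hpar : ¬ (2 ∣ (R₁ + R₂ - (γ - α))) := by
    rintro ⟨k, hk⟩
    have hmem : ((α + R₁ - k, k) : ℤ × ℤ) ∈
        digCircle (α, 0) R₁ ∩ digCircle (γ, 0) R₂ := by
      constructor <;>
        · simp only [digCircle, dL1, Set.mem_setOf_eq, Int.abs_eq_natAbs]
          omega
    rw [hdisj] at hmem
    exact hmem
  have h2 : 2 ∣ (R₁ - 1 + R₂ - (γ - α)) := by omega
  obtain ⟨m, hm⟩ := h2
  refine ⟨(α + (R₁ - 1) - m, m), ?_, ?_⟩ <;>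
    · simp only [digCircle, dL1, Set.mem_setOf_eq, Int.abs_eq_natAbs]
      omega
end

section
/- Let x = (α,0) and y = (γ,0) be points of ℤ² with α ≤ γ, and let R₁, R₂ ≥ 0 be integers with C_d(x,R₁) ∩ C_d(y,R₂) ≠ ∅. Then D_d(x,R₁) ∩ D_d(y,R₂) = D_d(c, r), where c = ((α + γ + R₁ − R₂)/2, 0) and r = (R₁ + R₂ − (γ − α))/2 (both of which are integers, with r ≥ 0, under the stated hypotheses). -/
/-- Digital disc with center `x` and radius `R`. -/
def digDisc (x : ℤ × ℤ) (R : ℤ) : Set (ℤ × ℤ) := {z | dL1 x z ≤ R}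

theorem digDisc_inter_eq_disc (α γ R₁ R₂ : ℤ) (hαγ : α ≤ γ)
    (hR₁ : 0 ≤ R₁) (hR₂ : 0 ≤ R₂)
    (hcap : (digCircle (α, 0) R₁ ∩ digCircle (γ, 0) R₂).Nonempty) :
    digDisc (α, 0) R₁ ∩ digDisc (γ, 0) R₂ =
      digDisc ((α + γ + R₁ - R₂) / 2, 0) ((R₁ + R₂ - (γ - α)) / 2) := by
  obtain ⟨w, hw1, hw2⟩ := hcap
  simp only [digCircle, Set.mem_setOf_eq, dL1, Int.abs_eq_natAbs] at hw1 hw2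
  ext z
  simp only [Set.mem_inter_iff, digDisc, Set.mem_setOf_eq, dL1, Int.abs_eq_natAbs]
  omega
end

section
/- Let x = (α,0) and y = (γ,0) be points of ℤ² with α ≤ γ, and let R₁, R₂ ≥ 0 be integers with C_d(x,R₁) ∩ C_d(y,R₂) ≠ ∅. Then card(D_d(x,R₁) ∩ D_d(y,R₂)) = 2r² + 2r + 1, where r = (R₁ + R₂ − (γ − α))/2 (an integer ≥ 0 under the stated hypotheses). -/
/-!
A common point of the two circles forces, by the triangle inequality,
`|R₁ - R₂| ≤ γ - α ≤ R₁ + R₂`, and, since `|t| ≡ t (mod 2)`, that `R₁ + R₂ - (γ - α) = 2r` is even.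
Under these constraints the minimum of the two "tents" `R₁ - |α - a|` and `R₂ - |γ - a|` is again
a tent `r - |c - a|` with `c = α + R₁ - r`, so the intersection of the two discs is the disc of
radius `r` about `(c, 0)`. A disc of radius `r` has
`∑_{|a| ≤ r} (2(r - |a|) + 1) = (2r + 1)² - 2r(r + 1) = 2r² + 2r + 1` points.
-/

open Finset

lemma dL1_comm (x y : ℤ × ℤ) : dL1 x y = dL1 y x := by
  simp only [dL1, abs_sub_comm]

lemma dL1_triangle (x y z : ℤ × ℤ) : dL1 x z ≤ dL1 x y + dL1 y z := by
  unfold dL1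
  linarith [abs_sub_le x.1 y.1 z.1, abs_sub_le x.2 y.2 z.2]

lemma even_dL1_add_dL1_sub_dL1 (x y z : ℤ × ℤ) : Even (dL1 x z + dL1 y z - dL1 x y) := by
  simp only [dL1, Int.even_add, Int.even_sub, even_abs]
  tauto

lemma min_sub_abs_sub_eq {α γ R₁ R₂ r : ℤ} (hr : 2 * r = R₁ + R₂ - (γ - α))
    (h₁ : R₁ - R₂ ≤ γ - α) (h₂ : R₂ - R₁ ≤ γ - α) (a : ℤ) :
    min (R₁ - |α - a|) (R₂ - |γ - a|) = r - |α + R₁ - r - a| := by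
  rcases abs_cases (α - a) with ⟨h, _⟩ | ⟨h, _⟩ <;>
  rcases abs_cases (γ - a) with ⟨h', _⟩ | ⟨h', _⟩ <;>
  rcases abs_cases (α + R₁ - r - a) with ⟨h'', _⟩ | ⟨h'', _⟩ <;>
  rw [h, h', h''] <;> omega

lemma digDisc_inter_digDisc {α β γ R₁ R₂ r : ℤ} (hr : 2 * r = R₁ + R₂ - (γ - α))
    (h₁ : R₁ - R₂ ≤ γ - α) (h₂ : R₂ - R₁ ≤ γ - α) :
    digDisc (α, β) R₁ ∩ digDisc (γ, β) R₂ = digDisc (α + R₁ - r, β) r := by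
  ext z
  simp only [digDisc, dL1, Set.mem_inter_iff, Set.mem_ofPred_eq]
  calc (|α - z.1| + |β - z.2| ≤ R₁ ∧ |γ - z.1| + |β - z.2| ≤ R₂)
      ↔ |β - z.2| ≤ min (R₁ - |α - z.1|) (R₂ - |γ - z.1|) := by
        rw [le_min_iff, le_sub_iff_add_le', le_sub_iff_add_le']
    _ ↔ |α + R₁ - r - z.1| + |β - z.2| ≤ r := by
        rw [min_sub_abs_sub_eq hr h₁ h₂, le_sub_iff_add_le']

lemma sum_abs_Icc_neg {r : ℤ} (hr : 0 ≤ r) : ∑ a ∈ Icc (-r) r, |a| = r * (r + 1) := by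
  induction r, hr using Int.leInduction with
  | base => simp
  | succ n hn ih =>
    have hIcc : Icc (-(n + 1)) (n + 1) = insert (-(n + 1)) (insert (n + 1) (Icc (-n) n)) := by
      ext a
      simp only [mem_Icc, mem_insert]
      omega
    rw [hIcc, sum_insert (by simp only [mem_insert, mem_Icc]; omega),
      sum_insert (by simp only [mem_Icc]; omega), ih, abs_neg, abs_of_nonneg (by omega)]
    ring

lemma filter_abs_add_abs_le_eq_Icc (a r : ℤ) :
    (Icc (-r) r).filter (fun b => |a| + |b| ≤ r) = Icc (|a| - r) (r - |a|) := by
  ext b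
  simp only [mem_filter, mem_Icc, ← le_sub_iff_add_le', abs_le, neg_sub]
  refine ⟨fun h => h.2, fun h => ⟨?_, h⟩⟩
  constructor <;> linarith [abs_nonneg a]

noncomputable def originDiscFinset (r : ℤ) : Finset (ℤ × ℤ) :=
  (Icc (-r) r ×ˢ Icc (-r) r).filter fun z => |z.1| + |z.2| ≤ r

lemma card_originDiscFinset {r : ℤ} (hr : 0 ≤ r) :
    ((originDiscFinset r).card : ℤ) = 2 * r ^ 2 + 2 * r + 1 := by
  have hfibre : ∀ a ∈ Icc (-r) r,
      (((Icc (-r) r).filter fun b => |a| + |b| ≤ r).card : ℤ) = 2 * (r - |a|) + 1 := by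
    intro a ha
    have ha' : |a| ≤ r := abs_le.mpr (mem_Icc.mp ha)
    rw [filter_abs_add_abs_le_eq_Icc, Int.card_Icc, Int.toNat_of_nonneg (by linarith)]
    ring
  rw [originDiscFinset, card_filter, sum_product]
  simp only [← card_filter]
  push_cast
  rw [sum_congr rfl hfibre, sum_add_distrib, ← mul_sum, sum_sub_distrib, sum_abs_Icc_neg hr]
  simp only [sum_const, Int.card_Icc, nsmul_eq_mul]
  rw [Int.toNat_of_nonneg (by omega)]
  ring

lemma digDisc_zero_eq (r : ℤ) : digDisc 0 r = ↑(originDiscFinset r) := by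
  ext z
  simp only [digDisc, dL1, originDiscFinset, Set.mem_ofPred_eq, coe_filter, mem_product,
    Prod.fst_zero, Prod.snd_zero, zero_sub, abs_neg]
  refine ⟨fun h => ⟨⟨?_, ?_⟩, h⟩, fun h => h.2⟩ <;>
    rw [mem_Icc, ← abs_le] <;> linarith [abs_nonneg z.1, abs_nonneg z.2]

lemma digDisc_eq_image_add (x : ℤ × ℤ) (r : ℤ) : digDisc x r = (x + ·) '' digDisc 0 r := by
  ext z
  refine ⟨fun h => ⟨z - x, ?_, add_sub_cancel x z⟩, ?_⟩
  · simpa [digDisc, dL1, abs_sub_comm] using h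
  · rintro ⟨w, hw, rfl⟩
    simpa [digDisc, dL1, abs_sub_comm] using hw

lemma ncard_digDisc (x : ℤ × ℤ) {r : ℤ} (hr : 0 ≤ r) :
    ((digDisc x r).ncard : ℤ) = 2 * r ^ 2 + 2 * r + 1 := by
  rw [digDisc_eq_image_add, Set.ncard_image_of_injective _ (add_right_injective x),
    digDisc_zero_eq, Set.ncard_coe_finset, card_originDiscFinset hr]

theorem digDisc_inter_card_general (α γ R₁ R₂ : ℤ) (hαγ : α ≤ γ)
    (hcap : (digCircle (α, 0) R₁ ∩ digCircle (γ, 0) R₂).Nonempty) :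
    ((digDisc (α, 0) R₁ ∩ digDisc (γ, 0) R₂).ncard : ℤ) =
      2 * ((R₁ + R₂ - (γ - α)) / 2) ^ 2 + 2 * ((R₁ + R₂ - (γ - α)) / 2) + 1 := by
  obtain ⟨z, hz₁ : dL1 (α, 0) z = R₁, hz₂ : dL1 (γ, 0) z = R₂⟩ := hcap
  have hxy : dL1 (α, 0) (γ, 0) = γ - α := by simp [dL1, abs_of_nonpos (sub_nonpos.mpr hαγ)]
  obtain ⟨r, hr⟩ : Even (R₁ + R₂ - (γ - α)) := by
    simpa only [hz₁, hz₂, hxy] using even_dL1_add_dL1_sub_dL1 (α, 0) (γ, 0) z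
  have h₀ : γ - α ≤ R₁ + R₂ := by
    simpa only [hxy, hz₁, dL1_comm z, hz₂] using dL1_triangle (α, 0) z (γ, 0)
  have h₁ : R₁ ≤ γ - α + R₂ := by
    simpa only [hxy, hz₁, hz₂] using dL1_triangle (α, 0) (γ, 0) z
  have h₂ : R₂ ≤ γ - α + R₁ := by
    simpa only [dL1_comm (γ, 0) (α, 0), hxy, hz₁, hz₂] using dL1_triangle (γ, 0) (α, 0) z
  rw [show (R₁ + R₂ - (γ - α)) / 2 = r by omega,
    digDisc_inter_digDisc (by omega : 2 * r = R₁ + R₂ - (γ - α)) (by omega) (by omega),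
    ncard_digDisc _ (by omega)]

theorem digDisc_inter_card (α γ R₁ R₂ : ℤ) (hαγ : α ≤ γ)
    (hR₁ : 0 ≤ R₁) (hR₂ : 0 ≤ R₂)
    (hcap : (digCircle (α, 0) R₁ ∩ digCircle (γ, 0) R₂).Nonempty) :
    ((digDisc (α, 0) R₁ ∩ digDisc (γ, 0) R₂).ncard : ℤ) =
      2 * ((R₁ + R₂ - (γ - α)) / 2) ^ 2 + 2 * ((R₁ + R₂ - (γ - α)) / 2) + 1 :=
  digDisc_inter_card_general α γ R₁ R₂ hαγ hcap
end

section
/- Let x = (α,0) and y = (γ,0) be points of ℤ² with α < γ, and let R₁, R₂ be integers with R₁ ≥ 1, R₂ ≥ 0 and |R₁ − R₂| ≤ γ − α ≤ R₁ + R₂. If C_d(x,R₁) ∩ C_d(y,R₂) = ∅, then D_d(x,R₁) ∩ D_d(y,R₂) = D_d(c, r₀) ∪ D_d(c', r₀), where r₀ = (R₁ + R₂ − 1 − (γ − α))/2, c = ((α + γ + R₁ − R₂ − 1)/2, 0), and c' = c + (1,0) (all the indicated halves being integers, with r₀ ≥ 0, under the stated hypotheses). -/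
theorem digDisc_inter_eq_union_discs (α γ R₁ R₂ : ℤ) (hαγ : α < γ)
    (hR₁ : 1 ≤ R₁) (hR₂ : 0 ≤ R₂)
    (hlo : |R₁ - R₂| ≤ γ - α) (hhi : γ - α ≤ R₁ + R₂)
    (hdisj : digCircle (α, 0) R₁ ∩ digCircle (γ, 0) R₂ = ∅) :
    digDisc (α, 0) R₁ ∩ digDisc (γ, 0) R₂ =
      digDisc ((α + γ + R₁ - R₂ - 1) / 2, 0) ((R₁ + R₂ - 1 - (γ - α)) / 2) ∪
      digDisc (((α + γ + R₁ - R₂ - 1) / 2, 0) + (1, 0)) ((R₁ + R₂ - 1 - (γ - α)) / 2) := by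
  obtain ⟨hlo1, hlo2⟩ := abs_le.mp hlo
  have hodd : (R₁ + R₂ - (γ - α)) % 2 = 1 := by
    by_contra h
    set s := (R₁ + R₂ - (γ - α)) / 2 with hsdef
    have hs : R₁ + R₂ - (γ - α) = 2 * s := by omega
    have hmem : (α + (R₁ - s), s) ∈ digCircle (α, 0) R₁ ∩ digCircle (γ, 0) R₂ := by
      constructor <;>
        simp only [digCircle, dL1, Set.mem_setOf_eq] <;>
        rcases abs_cases (α - (α + (R₁ - s))) with ⟨h1, h2⟩ | ⟨h1, h2⟩ <;>
        rcases abs_cases (γ - (α + (R₁ - s))) with ⟨h3, h4⟩ | ⟨h3, h4⟩ <;>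
        rcases abs_cases ((0 : ℤ) - s) with ⟨h5, h6⟩ | ⟨h5, h6⟩ <;>
        omega
    rw [hdisj] at hmem
    exact hmem
  ext ⟨a, b⟩
  simp only [Set.mem_inter_iff, Set.mem_union, digDisc, dL1, Set.mem_setOf_eq,
    Prod.mk_add_mk, Prod.fst, Prod.snd, zero_add, add_zero]
  rcases abs_cases (α - a) with ⟨h1, h2⟩ | ⟨h1, h2⟩ <;>
    rcases abs_cases (γ - a) with ⟨h3, h4⟩ | ⟨h3, h4⟩ <;>
    rcases abs_cases ((0 : ℤ) - b) with ⟨h5, h6⟩ | ⟨h5, h6⟩ <;>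
    rcases abs_cases ((α + γ + R₁ - R₂ - 1) / 2 - a) with ⟨h7, h8⟩ | ⟨h7, h8⟩ <;>
    rcases abs_cases ((α + γ + R₁ - R₂ - 1) / 2 + 1 - a) with ⟨h9, h10⟩ | ⟨h9, h10⟩ <;>
    omega
end

section
/- Let x = (α,0) and y = (γ,0) be points of ℤ² with α < γ, and let R₁, R₂ be integers with R₁ ≥ 1, R₂ ≥ 0 and |R₁ − R₂| ≤ γ − α ≤ R₁ + R₂. If C_d(x,R₁) ∩ C_d(y,R₂) = ∅, then card(D_d(x,R₁) ∩ D_d(y,R₂)) = 2(r₀ + 1)², where r₀ = (R₁ + R₂ − 1 − (γ − α))/2 (an integer ≥ 0 under the stated hypotheses). -/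
lemma key_sum (n : ℕ) :
    ∑ v ∈ Finset.Icc (-(n:ℤ)) (n:ℤ), (2*((n:ℤ)+1) - 2*|v|) = 2*((n:ℤ)+1)^2 := by
  induction n with
  | zero => simp
  | succ n ih =>
    have hset : Finset.Icc (-((n:ℤ)+1)) ((n:ℤ)+1)
        = insert (-((n:ℤ)+1)) (insert ((n:ℤ)+1) (Finset.Icc (-(n:ℤ)) (n:ℤ))) := by
      ext a; simp [Finset.mem_Icc]; omega
    have h1 : (-((n:ℤ)+1)) ∉ insert ((n:ℤ)+1) (Finset.Icc (-(n:ℤ)) (n:ℤ)) := by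
      simp [Finset.mem_Icc]; omega
    have h2 : ((n:ℤ)+1) ∉ Finset.Icc (-(n:ℤ)) (n:ℤ) := by
      simp [Finset.mem_Icc]
    push_cast
    rw [hset, Finset.sum_insert h1, Finset.sum_insert h2]
    have hsum : ∑ v ∈ Finset.Icc (-(n:ℤ)) (n:ℤ), (2*(((n:ℤ)+1)+1) - 2*|v|)
        = ∑ v ∈ Finset.Icc (-(n:ℤ)) (n:ℤ), ((2*((n:ℤ)+1) - 2*|v|) + 2) := by
      apply Finset.sum_congr rfl; intro v _; ring
    rw [hsum, Finset.sum_add_distrib, ih, Finset.sum_const, Int.card_Icc]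
    have habs1 : |(-((n:ℤ)+1))| = (n:ℤ)+1 := by
      rw [abs_of_nonpos (by omega)]; ring
    have habs2 : |((n:ℤ)+1)| = (n:ℤ)+1 := abs_of_nonneg (by omega)
    have hcard : ((n:ℤ) + 1 - -(n:ℤ)).toNat = 2*n+1 := by omega
    rw [habs1, habs2, hcard]
    ring

theorem digDisc_inter_card_nonmeeting (α γ R₁ R₂ : ℤ) (hαγ : α < γ)
    (hR₁ : 1 ≤ R₁) (hR₂ : 0 ≤ R₂)
    (hlo : |R₁ - R₂| ≤ γ - α) (hhi : γ - α ≤ R₁ + R₂)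
    (hdisj : digCircle (α, 0) R₁ ∩ digCircle (γ, 0) R₂ = ∅) :
    ((digDisc (α, 0) R₁ ∩ digDisc (γ, 0) R₂).ncard : ℤ) =
      2 * ((R₁ + R₂ - 1 - (γ - α)) / 2 + 1) ^ 2 := by
  -- Step 1: parity. If R₁ + R₂ - (γ - α) were even, the circles would meet.
  obtain ⟨hlo1, hlo2⟩ := abs_le.mp hlo
  have hodd : (R₁ + R₂ - (γ - α)) % 2 = 1 := by
    by_contra h
    have he : (R₁ + R₂ - (γ - α)) % 2 = 0 := by omega
    set t := (R₁ + R₂ - (γ - α)) / 2 with ht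
    have ht2 : 2 * t = R₁ + R₂ - (γ - α) := by omega
    have ht0 : 0 ≤ t := by omega
    have htR : t ≤ R₁ := by omega
    have hz : ((α + R₁ - t, t) : ℤ × ℤ) ∈ digCircle (α, 0) R₁ ∩ digCircle (γ, 0) R₂ := by
      constructor <;> simp only [digCircle, dL1, Set.mem_setOf_eq]
      · have : |α - (α + R₁ - t)| = R₁ - t := by
          rw [abs_sub_comm, abs_of_nonneg (by omega)]; ring
        rw [this, abs_of_nonpos (by omega)]; ring
      · have : |γ - (α + R₁ - t)| = R₂ - t := by
          rw [abs_of_nonneg (by omega)]; omega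
        rw [this, abs_of_nonpos (by omega)]; ring
    rw [hdisj] at hz
    exact hz
  set r₀ : ℤ := (R₁ + R₂ - 1 - (γ - α)) / 2 with hr₀
  have hr : 2 * r₀ + 1 = R₁ + R₂ - (γ - α) := by omega
  have hr0 : 0 ≤ r₀ := by omega
  -- Step 2: describe the intersection as an explicit finset.
  set T : Finset (ℤ × ℤ) := (Finset.Icc (-r₀) r₀).biUnion
      (fun v => (Finset.Icc (γ - R₂ + |v|) (α + R₁ - |v|)).image (fun u => (u, v))) with hT
  have hkey : digDisc (α, 0) R₁ ∩ digDisc (γ, 0) R₂ = ↑T := by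
    ext ⟨u, v⟩
    simp only [Set.mem_inter_iff, digDisc, dL1, Set.mem_setOf_eq, hT,
      Finset.coe_biUnion, Set.mem_iUnion, Finset.mem_coe, Finset.mem_Icc,
      Finset.mem_image, Prod.mk.injEq]
    constructor
    · rintro ⟨h1, h2⟩
      have n1 := abs_nonneg (α - u); have n2 := abs_nonneg (γ - u)
      have n3 := abs_nonneg ((0:ℤ) - v); have n4 := abs_nonneg v
      rcases abs_choice (α - u) with ha | ha <;> rcases abs_choice (γ - u) with hb | hb <;>
        rcases abs_choice ((0:ℤ) - v) with hc | hc <;>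
        refine ⟨v, by omega, u, ?_, rfl, rfl⟩ <;>
        rcases abs_choice v with hv | hv <;> omega
    · rintro ⟨w, hw, u', ⟨hu1, hu2⟩, rfl, rfl⟩
      have n1 := abs_nonneg (α - u'); have n2 := abs_nonneg (γ - u')
      have n3 := abs_nonneg ((0:ℤ) - w); have n4 := abs_nonneg w
      rcases abs_choice (α - u') with ha | ha <;> rcases abs_choice (γ - u') with hb | hb <;>
        rcases abs_choice ((0:ℤ) - w) with hc | hc <;>
        rcases abs_choice w with hv | hv <;>
        constructor <;> omega
  -- Step 3: count T.
  have hdisjT : ∀ v₁ ∈ Finset.Icc (-r₀) r₀, ∀ v₂ ∈ Finset.Icc (-r₀) r₀, v₁ ≠ v₂ →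
      Disjoint ((Finset.Icc (γ - R₂ + |v₁|) (α + R₁ - |v₁|)).image (fun u => (u, v₁)))
        ((Finset.Icc (γ - R₂ + |v₂|) (α + R₁ - |v₂|)).image (fun u => (u, v₂))) := by
    intro v₁ _ v₂ _ hne
    simp only [Finset.disjoint_left, Finset.mem_image]
    rintro ⟨a, b⟩ ⟨u₁, _, h₁⟩ ⟨u₂, _, h₂⟩
    apply hne
    rw [← h₁] at h₂
    exact (Prod.mk.injEq _ _ _ _ ▸ h₂).2.symm
  have hcardT : (T.card : ℤ) = 2 * (r₀ + 1) ^ 2 := by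
    rw [hT, Finset.card_biUnion hdisjT]
    push_cast
    have hstep : ∀ v ∈ Finset.Icc (-r₀) r₀,
        ((((Finset.Icc (γ - R₂ + |v|) (α + R₁ - |v|)).image (fun u => (u, v))).card : ℤ))
          = 2 * (r₀ + 1) - 2 * |v| := by
      intro v hv
      rw [Finset.card_image_of_injective _ (fun a b hab => (Prod.mk.injEq _ _ _ _ ▸ hab).1),
        Int.card_Icc]
      simp only [Finset.mem_Icc] at hv
      have hvabs : |v| ≤ r₀ := abs_le.mpr hv
      rw [Int.toNat_of_nonneg (by omega)]
      omega
    rw [Finset.sum_congr rfl hstep]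
    have := key_sum r₀.toNat
    rw [Int.toNat_of_nonneg hr0] at this
    rw [this]
  rw [hkey, Set.ncard_coe_finset, hcardT]
end

section
/- Let D_d(x,R₁) and D_d(y,R₂) be digital discs with x = (α,0), y = (γ,0), α < γ, and let R₁, R₂ be integers with R₁ ≥ 1, R₂ ≥ 0 and |R₁ − R₂| ≤ γ − α ≤ R₁ + R₂. If C_d(x,R₁) ∩ C_d(y,R₂) = ∅, then m(D_d(x,R₁), D_d(y,R₂)) = 2(R₁² + R₂² + R₁ + R₂ − 2r₀² − 4r₀ − 1), where r₀ = (R₁ + R₂ − 1 − (γ − α))/2 (an integer ≥ 0 under the stated hypotheses). -/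
/-- Jaccard-like metric: cardinality of the symmetric difference. -/
noncomputable def jm (A B : Set (ℤ × ℤ)) : ℕ := (symmDiff A B).ncard


/-!
In the rotated coordinates `u = a - b`, `v = a + b`, an L1 disc centred on the horizontal axis is the
square `[c - R, c + R]²`, and two such squares meet in another one, namely `[γ - R₂, α + R₁]²`.
The lattice points of a square `[lo, hi]²` in these coordinates are those with `u ≡ v (mod 2)`;
splitting by the parity of `u - lo` they form two square grids of sides `⌊(hi - lo + 2) / 2⌋` and
`⌊(hi - lo + 1) / 2⌋`. Disjointness of the boundary circles forces the width `R₁ + R₂ - (γ - α)` of the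
intersection to be odd (otherwise the top vertex of the intersection lies on both circles), so
the intersection consists of two grids of equal side `r₀ + 1`.
-/

open Finset

def diagSquare (lo hi : ℤ) : Set (ℤ × ℤ) :=
  {z | z.1 - z.2 ∈ Set.Icc lo hi ∧ z.1 + z.2 ∈ Set.Icc lo hi}

theorem diagSquare_inter (lo₁ hi₁ lo₂ hi₂ : ℤ) :
    diagSquare lo₁ hi₁ ∩ diagSquare lo₂ hi₂ = diagSquare (max lo₁ lo₂) (min hi₁ hi₂) := by
  ext z
  simp only [diagSquare, Set.mem_inter_iff, Set.mem_ofPred_eq, Set.mem_Icc]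
  omega

theorem digDisc_eq_diagSquare (c R : ℤ) : digDisc (c, 0) R = diagSquare (c - R) (c + R) := by
  ext ⟨a, b⟩
  simp only [digDisc, dL1, diagSquare, Set.mem_ofPred_eq, Set.mem_Icc, zero_sub, abs_neg]
  rcases abs_cases (c - a) with ⟨h, _⟩ | ⟨h, _⟩ <;> rw [h] <;>
    rcases abs_cases b with ⟨h', _⟩ | ⟨h', _⟩ <;> rw [h'] <;> omega

noncomputable def diagLattice (c n : ℤ) : Finset (ℤ × ℤ) :=
  (Ico 0 n ×ˢ Ico 0 n).image fun p => (c + p.1 + p.2, p.2 - p.1)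

theorem mem_diagLattice {c n : ℤ} {z : ℤ × ℤ} :
    z ∈ diagLattice c n ↔
      2 ∣ z.1 - z.2 - c ∧ c ≤ z.1 - z.2 ∧ z.1 - z.2 < c + 2 * n ∧
        c ≤ z.1 + z.2 ∧ z.1 + z.2 < c + 2 * n := by
  simp only [diagLattice, mem_image, mem_product, mem_Ico]
  constructor
  · rintro ⟨p, hp, rfl⟩
    omega
  · intro h
    exact ⟨((z.1 - z.2 - c) / 2, (z.1 + z.2 - c) / 2), by omega, by ext <;> omega⟩

theorem card_diagLattice (c : ℤ) {n : ℤ} (hn : 0 ≤ n) : (#(diagLattice c n) : ℤ) = n ^ 2 := by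
  have hinj : Function.Injective fun p : ℤ × ℤ => (c + p.1 + p.2, p.2 - p.1) := fun p q h => by
    simp only [Prod.mk.injEq] at h
    ext <;> omega
  rw [diagLattice, card_image_of_injective _ hinj, card_product, Int.card_Ico, sub_zero,
    Nat.cast_mul, Int.toNat_of_nonneg hn, sq]

theorem disjoint_diagLattice (c m n : ℤ) : Disjoint (diagLattice c m) (diagLattice (c + 1) n) := by
  rw [disjoint_left]
  intro z
  simp only [mem_diagLattice]
  omega

theorem diagSquare_eq_diagLattice_union (lo hi : ℤ) :
    diagSquare lo hi =
      ↑(diagLattice lo ((hi - lo + 2) / 2) ∪ diagLattice (lo + 1) ((hi - lo + 1) / 2)) := by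
  ext z
  simp only [diagSquare, Set.mem_ofPred_eq, Set.mem_Icc, coe_union, Set.mem_union, mem_coe,
    mem_diagLattice]
  omega

theorem diagSquare_finite (lo hi : ℤ) : (diagSquare lo hi).Finite := by
  rw [diagSquare_eq_diagLattice_union]
  exact finite_toSet _

theorem ncard_diagSquare {lo hi : ℤ} (h : lo ≤ hi + 1) :
    ((diagSquare lo hi).ncard : ℤ) = ((hi - lo + 2) / 2) ^ 2 + ((hi - lo + 1) / 2) ^ 2 := by
  rw [diagSquare_eq_diagLattice_union, Set.ncard_coe_finset,
    card_union_of_disjoint (disjoint_diagLattice _ _ _), Nat.cast_add,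
    card_diagLattice _ (by omega), card_diagLattice _ (by omega)]

theorem ncard_digDisc_s11 (c : ℤ) {R : ℤ} (hR : 0 ≤ R) :
    ((digDisc (c, 0) R).ncard : ℤ) = (R + 1) ^ 2 + R ^ 2 := by
  rw [digDisc_eq_diagSquare, ncard_diagSquare (by omega)]
  congr 2 <;> omega

theorem Set.ncard_symmDiff_add_two_mul_ncard_inter {α : Type*} {s t : Set α} (hs : s.Finite)
    (ht : t.Finite) : (symmDiff s t).ncard + 2 * (s ∩ t).ncard = s.ncard + t.ncard := by
  have hdiff : ((s ∪ t) \ (s ∩ t)).ncard + (s ∩ t).ncard = (s ∪ t).ncard :=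
    ncard_sdiff_add_ncard_of_subset inf_le_sup (hs.union ht)
  have hunion := ncard_union_add_ncard_inter s t hs ht
  rw [symmDiff_eq_sup_sdiff_inf]
  change ((s ∪ t) \ (s ∩ t)).ncard + _ = _
  omega

theorem digCircle_inter_nonempty_of_even {α γ R₁ R₂ : ℤ} (hlo : |R₁ - R₂| ≤ γ - α)
    (hhi : γ - α ≤ R₁ + R₂) (heven : Even (R₁ + R₂ - (γ - α))) :
    (digCircle (α, 0) R₁ ∩ digCircle (γ, 0) R₂).Nonempty := by
  obtain ⟨k, hk⟩ := heven
  have := abs_le.mp hlo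
  refine ⟨(α + R₁ - k, k), ?_, ?_⟩ <;> simp only [digCircle, dL1, Set.mem_ofPred_eq]
  · rw [abs_of_nonpos (by omega), abs_of_nonpos (by omega)]
    omega
  · rw [abs_of_nonneg (by omega), abs_of_nonpos (by omega)]
    omega

theorem jm_discs_nonmeeting_boundaries_general (α γ R₁ R₂ : ℤ)
    (hlo : |R₁ - R₂| ≤ γ - α) (hhi : γ - α ≤ R₁ + R₂)
    (hdisj : digCircle (α, 0) R₁ ∩ digCircle (γ, 0) R₂ = ∅) :
    (jm (digDisc (α, 0) R₁) (digDisc (γ, 0) R₂) : ℤ) =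
      2 * (R₁ ^ 2 + R₂ ^ 2 + R₁ + R₂ -
        2 * ((R₁ + R₂ - 1 - (γ - α)) / 2) ^ 2 -
        4 * ((R₁ + R₂ - 1 - (γ - α)) / 2) - 1) := by
  obtain ⟨k, hk⟩ : Odd (R₁ + R₂ - (γ - α)) := Int.not_even_iff_odd.mp fun h =>
    (digCircle_inter_nonempty_of_even hlo hhi h).ne_empty hdisj
  have hR := abs_le.mp hlo
  have hinter : digDisc (α, 0) R₁ ∩ digDisc (γ, 0) R₂ = diagSquare (γ - R₂) (α + R₁) := by
    rw [digDisc_eq_diagSquare, digDisc_eq_diagSquare, diagSquare_inter,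
      max_eq_right (by omega), min_eq_left (by omega)]
  have hcount : ((symmDiff (digDisc (α, 0) R₁) (digDisc (γ, 0) R₂)).ncard : ℤ) +
      2 * (diagSquare (γ - R₂) (α + R₁)).ncard =
      (digDisc (α, 0) R₁).ncard + (digDisc (γ, 0) R₂).ncard := by
    rw [← hinter]
    exact_mod_cast Set.ncard_symmDiff_add_two_mul_ncard_inter
      (digDisc_eq_diagSquare α R₁ ▸ diagSquare_finite _ _)
      (digDisc_eq_diagSquare γ R₂ ▸ diagSquare_finite _ _)
  have hI := ncard_diagSquare (lo := γ - R₂) (hi := α + R₁) (by omega)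
  rw [show (α + R₁ - (γ - R₂) + 2) / 2 = k + 1 by omega,
    show (α + R₁ - (γ - R₂) + 1) / 2 = k + 1 by omega] at hI
  rw [jm, show (R₁ + R₂ - 1 - (γ - α)) / 2 = k by omega]
  have hA := ncard_digDisc_s11 α (R := R₁) (by omega)
  have hB := ncard_digDisc_s11 γ (R := R₂) (by omega)
  linear_combination hcount - 2 * hI + hA + hB

theorem jm_discs_nonmeeting_boundaries (α γ R₁ R₂ : ℤ) (hαγ : α < γ)
    (hR₁ : 1 ≤ R₁) (hR₂ : 0 ≤ R₂)
    (hlo : |R₁ - R₂| ≤ γ - α) (hhi : γ - α ≤ R₁ + R₂)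
    (hdisj : digCircle (α, 0) R₁ ∩ digCircle (γ, 0) R₂ = ∅) :
    (jm (digDisc (α, 0) R₁) (digDisc (γ, 0) R₂) : ℤ) =
      2 * (R₁ ^ 2 + R₂ ^ 2 + R₁ + R₂ -
        2 * ((R₁ + R₂ - 1 - (γ - α)) / 2) ^ 2 -
        4 * ((R₁ + R₂ - 1 - (γ - α)) / 2) - 1) :=
  jm_discs_nonmeeting_boundaries_general α γ R₁ R₂ hlo hhi hdisj
end
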